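/- arXiv:1208.5167 — 4 statements merged into one kernel-verified Lean document; each statement's English description precedes it below -/
import Mathlib

section
/- Let S and S' be sets of countable limit ordinals. If there exists a closed unbounded set C ⊆ ω₁ with C ∩ (S Δ S') = ∅ (i.e. the symmetric difference S Δ S' is nonstationary in ω₁), then the linear orders Φ(S) and Φ(S') are order-isomorphic. -/
noncomputable section

open Set

/-- The first uncountable ordinal. -/
def omega1 : Ordinal := (Cardinal.aleph 1).ord

/-- `η_γ(S)`: the linear order `ℚ` if `γ ∉ S`, and `1 + ℚ` (i.e. `WithBot ℚ`) if `γ ∈ S`,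
realized uniformly as a subset of `WithBot ℚ`. -/
def Eta (S : Set Ordinal) (γ : Ordinal) : Type := {x : WithBot ℚ // γ ∈ S ∨ x ≠ ⊥}

instance (S : Set Ordinal) (γ : Ordinal) : LinearOrder (Eta S γ) :=
  inferInstanceAs (LinearOrder {x : WithBot ℚ // γ ∈ S ∨ x ≠ ⊥})

/-- `Φ(S,α,β)`: the lexicographic sum `Σ_{α ≤ γ < β} η_γ(S)`. -/
def Phi (S : Set Ordinal) (α β : Ordinal) : Type 1 :=
  Lex (Σ γ : Ico α β, Eta S γ.1)

instance (S : Set Ordinal) (α β : Ordinal) : LinearOrder (Phi S α β) :=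
  inferInstanceAs (LinearOrder (Lex (Σ γ : Ico α β, Eta S γ.1)))

/-- `C ⊆ ω₁` is closed unbounded. -/
def IsClubOmega1 (C : Set Ordinal) : Prop :=
  (∀ c ∈ C, c < omega1) ∧
  (∀ δ < omega1, ∃ c ∈ C, δ < c) ∧
  (∀ X ⊆ C, X.Nonempty → sSup X < omega1 → sSup X ∈ C)

instance (S : Set Ordinal) (γ : Ordinal) : Countable (Eta S γ) :=
  inferInstanceAs (Countable {x : WithBot ℚ // γ ∈ S ∨ x ≠ ⊥})

lemma eta_lt_def {S : Set Ordinal} {γ : Ordinal} {x y : Eta S γ} : x < y ↔ x.1 < y.1 := Iff.rfl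

/-- an element of Eta with nonbot value -/
def etaQ {S : Set Ordinal} {γ : Ordinal} (q : ℚ) : Eta S γ := ⟨(q : WithBot ℚ), Or.inr (by simp)⟩

lemma phi_lt_right {S : Set Ordinal} {α β : Ordinal} {i : Ico α β} {x y : Eta S i.1}
    (h : x < y) : (toLex ⟨i, x⟩ : Phi S α β) < toLex ⟨i, y⟩ :=
  @Sigma.Lex.right (Ico α β) (fun γ => Eta S γ.1) (· < ·) (fun i => (· < ·)) i x y h

lemma phi_lt_left {S : Set Ordinal} {α β : Ordinal} {i j : Ico α β} (x : Eta S i.1)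
    (y : Eta S j.1) (h : i.1 < j.1) : (toLex ⟨i, x⟩ : Phi S α β) < toLex ⟨j, y⟩ :=
  @Sigma.Lex.left (Ico α β) (fun γ => Eta S γ.1) (· < ·) (fun i => (· < ·)) i j x y h

lemma phi_lt_cases {S : Set Ordinal} {α β : Ordinal} {i j : Ico α β} {x : Eta S i.1}
    {y : Eta S j.1} (h : (toLex ⟨i, x⟩ : Phi S α β) < toLex ⟨j, y⟩) :
    i.1 < j.1 ∨ (i = j ∧ x.1 < y.1) := by
  have h' : Sigma.Lex (· < ·) (fun _ => (· < ·)) (⟨i, x⟩ : Σ γ : Ico α β, Eta S γ.1) ⟨j, y⟩ := h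
  cases h' with
  | left a b hij => exact Or.inl hij
  | right a b hxy => exact Or.inr ⟨rfl, hxy⟩

lemma eta_exists_gt {S : Set Ordinal} {γ : Ordinal} (x : Eta S γ) : ∃ y : Eta S γ, x < y := by
  obtain ⟨x, hx⟩ := x
  cases x with
  | bot => exact ⟨etaQ 0, eta_lt_def.mpr (WithBot.bot_lt_coe 0)⟩
  | coe q => exact ⟨etaQ (q + 1), eta_lt_def.mpr (WithBot.coe_lt_coe.mpr (by norm_num))⟩

lemma eta_exists_lt {S : Set Ordinal} {γ : Ordinal} (x : Eta S γ) (hx : x.1 ≠ ⊥) :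
    ∃ y : Eta S γ, y < x := by
  obtain ⟨q, hq⟩ := WithBot.ne_bot_iff_exists.mp hx
  refine ⟨etaQ (q - 1), eta_lt_def.mpr ?_⟩
  rw [← hq]
  exact WithBot.coe_lt_coe.mpr (by norm_num)

lemma eta_dense {S : Set Ordinal} {γ : Ordinal} (x y : Eta S γ) (h : x < y) :
    ∃ z : Eta S γ, x < z ∧ z < y := by
  rw [eta_lt_def] at h
  obtain ⟨q, hq⟩ := WithBot.ne_bot_iff_exists.mp h.ne_bot
  cases hx : x.1 with
  | bot =>
    refine ⟨etaQ (q - 1), eta_lt_def.mpr ?_, eta_lt_def.mpr ?_⟩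
    · rw [hx]; exact WithBot.bot_lt_coe _
    · rw [← hq]; exact WithBot.coe_lt_coe.mpr (by norm_num)
  | coe p =>
    have hpq : p < q := by
      rw [hx, ← hq] at h; exact WithBot.coe_lt_coe.mp h
    refine ⟨etaQ ((p + q) / 2), eta_lt_def.mpr ?_, eta_lt_def.mpr ?_⟩
    · rw [hx]; exact WithBot.coe_lt_coe.mpr (by linarith)
    · rw [← hq]; exact WithBot.coe_lt_coe.mpr (by linarith)

instance {S : Set Ordinal} {α β : Ordinal} : DenselyOrdered (Phi S α β) := by
  constructor
  rintro ⟨i, x⟩ ⟨j, y⟩ h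
  rcases phi_lt_cases h with hij | ⟨rfl, hxy⟩
  · obtain ⟨z, hz⟩ := eta_exists_gt x
    exact ⟨toLex ⟨i, z⟩, phi_lt_right hz, phi_lt_left z y hij⟩
  · obtain ⟨z, hz1, hz2⟩ := eta_dense x y (eta_lt_def.mpr hxy)
    exact ⟨toLex ⟨i, z⟩, phi_lt_right hz1, phi_lt_right hz2⟩

instance {S : Set Ordinal} {α β : Ordinal} : NoMaxOrder (Phi S α β) := by
  constructor
  rintro ⟨i, x⟩
  obtain ⟨z, hz⟩ := eta_exists_gt x
  exact ⟨toLex ⟨i, z⟩, phi_lt_right hz⟩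

lemma phi_noMin {S : Set Ordinal} {α β : Ordinal} (hα : α ∉ S) : NoMinOrder (Phi S α β) := by
  constructor
  rintro ⟨⟨γ, hγ⟩, x⟩
  rcases eq_or_lt_of_le hγ.1 with hc | hc
  · subst hc
    have hx : x.1 ≠ ⊥ := x.2.resolve_left hα
    obtain ⟨z, hz⟩ := eta_exists_lt x hx
    exact ⟨toLex ⟨⟨α, hγ⟩, z⟩, phi_lt_right hz⟩
  · exact ⟨toLex ⟨⟨α, ⟨le_rfl, lt_trans hc hγ.2⟩⟩, etaQ 0⟩, phi_lt_left _ x hc⟩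

lemma phi_nonempty {S : Set Ordinal} {α β : Ordinal} (h : α < β) : Nonempty (Phi S α β) :=
  ⟨toLex ⟨⟨α, ⟨le_rfl, h⟩⟩, etaQ 0⟩⟩

def phiBot {S : Set Ordinal} {α β : Ordinal} (hα : α ∈ S) (h : α < β) : Phi S α β :=
  toLex ⟨⟨α, ⟨le_rfl, h⟩⟩, ⟨⊥, Or.inl hα⟩⟩

lemma phiBot_le {S : Set Ordinal} {α β : Ordinal} (hα : α ∈ S) (h : α < β)
    (z : Phi S α β) : phiBot hα h ≤ z := by
  refine le_of_not_gt fun hz => ?_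
  obtain ⟨⟨γ, hγ⟩, x⟩ := z
  rcases phi_lt_cases hz with hij | ⟨he, hxy⟩
  · exact absurd hγ.1 (not_le.mpr hij)
  · exact not_lt_bot hxy

lemma phi_countable {S : Set Ordinal} {α β : Ordinal} (hβ : β < omega1) :
    Countable (Phi S α β) := by
  have h1 : (Iio β).Countable := by
    rw [Cardinal.countable_iff_lt_aleph_one, Ordinal.mk_Iio_ordinal]
    have : β.card < Cardinal.aleph 1 := Cardinal.lt_ord.mp hβ
    rw [← Cardinal.succ_aleph0, Order.lt_succ_iff] at this ⊢
    exact (Cardinal.lift_le.mpr this).trans_eq Cardinal.lift_aleph0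
  have h2 : (Ico α β).Countable := h1.mono Ico_subset_Iio_self
  haveI : Countable (Ico α β) := h2.to_subtype
  exact inferInstanceAs (Countable (Σ γ : Ico α β, Eta S γ.1))

section IsoTools
universe u v

lemma iso_of_bot {α : Type u} {β : Type v} [LinearOrder α] [LinearOrder β]
    [DenselyOrdered α] [NoMaxOrder α] [Countable α]
    [DenselyOrdered β] [NoMaxOrder β] [Countable β]
    (a₀ : α) (b₀ : β) (ha : ∀ x, a₀ ≤ x) (hb : ∀ y, b₀ ≤ y) :
    Nonempty (α ≃o β) := by
  obtain ⟨a₁, ha₁⟩ := exists_gt a₀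
  obtain ⟨b₁, hb₁⟩ := exists_gt b₀
  haveI : Nonempty {x : α // a₀ < x} := ⟨⟨a₁, ha₁⟩⟩
  haveI : Nonempty {y : β // b₀ < y} := ⟨⟨b₁, hb₁⟩⟩
  haveI : DenselyOrdered {x : α // a₀ < x} := ⟨fun x y hxy => by
    obtain ⟨z, hz1, hz2⟩ := exists_between (show x.1 < y.1 from hxy)
    exact ⟨⟨z, lt_trans x.2 hz1⟩, hz1, hz2⟩⟩
  haveI : DenselyOrdered {y : β // b₀ < y} := ⟨fun x y hxy => by
    obtain ⟨z, hz1, hz2⟩ := exists_between (show x.1 < y.1 from hxy)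
    exact ⟨⟨z, lt_trans x.2 hz1⟩, hz1, hz2⟩⟩
  haveI : NoMinOrder {x : α // a₀ < x} := ⟨fun x => by
    obtain ⟨z, hz1, hz2⟩ := exists_between x.2
    exact ⟨⟨z, hz1⟩, hz2⟩⟩
  haveI : NoMinOrder {y : β // b₀ < y} := ⟨fun x => by
    obtain ⟨z, hz1, hz2⟩ := exists_between x.2
    exact ⟨⟨z, hz1⟩, hz2⟩⟩
  haveI : NoMaxOrder {x : α // a₀ < x} := ⟨fun x => by
    obtain ⟨z, hz⟩ := exists_gt x.1
    exact ⟨⟨z, lt_trans x.2 hz⟩, hz⟩⟩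
  haveI : NoMaxOrder {y : β // b₀ < y} := ⟨fun x => by
    obtain ⟨z, hz⟩ := exists_gt x.1
    exact ⟨⟨z, lt_trans x.2 hz⟩, hz⟩⟩
  obtain ⟨e⟩ := Order.iso_of_countable_dense (α := {x : α // a₀ < x}) (β := {y : β // b₀ < y})
  classical
  set f : α → β := fun x => if h : a₀ < x then (e ⟨x, h⟩).1 else b₀ with hf
  have hmono : StrictMono f := by
    intro x y hxy
    by_cases hx : a₀ < x
    · have hy : a₀ < y := lt_trans hx hxy
      simp only [hf, dif_pos hx, dif_pos hy]
      exact e.strictMono (show (⟨x, hx⟩ : {x : α // a₀ < x}) < ⟨y, hy⟩ from hxy)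
    · have hxa : x = a₀ := le_antisymm (not_lt.mp hx) (ha x)
      have hy : a₀ < y := hxa ▸ hxy
      simp only [hf, dif_neg hx, dif_pos hy]
      exact (e ⟨y, hy⟩).2
  have hsurj : Function.Surjective f := by
    intro z
    by_cases hz : b₀ < z
    · refine ⟨(e.symm ⟨z, hz⟩).1, ?_⟩
      have h1 : a₀ < (e.symm ⟨z, hz⟩).1 := (e.symm ⟨z, hz⟩).2
      simp only [hf, dif_pos h1]
      exact congrArg Subtype.val (e.apply_symm_apply ⟨z, hz⟩)
    · refine ⟨a₀, ?_⟩
      simp only [hf, dif_neg (lt_irrefl a₀)]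
      exact (le_antisymm (not_lt.mp hz) (hb z)).symm
  exact ⟨hmono.orderIsoOfSurjective f hsurj⟩

def sigmaLexCongr {ι : Type u} [LinearOrder ι] {A B : ι → Type v}
    [∀ i, LinearOrder (A i)] [∀ i, LinearOrder (B i)] (e : ∀ i, A i ≃o B i) :
    Lex (Σ i, A i) ≃o Lex (Σ i, B i) := by
  classical
  set f : Lex (Σ i, A i) → Lex (Σ i, B i) :=
    fun a => toLex ⟨(ofLex a).1, e _ ((ofLex a).2)⟩ with hf
  have hmono : StrictMono f := by
    rintro ⟨i, x⟩ ⟨j, y⟩ hab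
    have h : Sigma.Lex (· < ·) (fun _ => (· < ·)) (⟨i, x⟩ : Σ i, A i) ⟨j, y⟩ := hab
    cases h with
    | left a b hij =>
      exact @Sigma.Lex.left ι B (· < ·) (fun i => (· < ·)) i j (e i x) (e j y) hij
    | right a b hxy =>
      exact @Sigma.Lex.right ι B (· < ·) (fun i => (· < ·)) i (e i x) (e i b)
        ((e i).strictMono hxy)
  have hsurj : Function.Surjective f := by
    rintro ⟨i, y⟩
    refine ⟨toLex ⟨i, (e i).symm y⟩, ?_⟩
    exact congrArg (fun t => toLex (Sigma.mk i t)) ((e i).apply_symm_apply y)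
  exact hmono.orderIsoOfSurjective f hsurj

end IsoTools

lemma blockIso {S S' : Set Ordinal} {α β : Ordinal} (hαβ : α < β) (hβ : β < omega1)
    (hiff : α ∈ S ↔ α ∈ S') : Nonempty (Phi S α β ≃o Phi S' α β) := by
  haveI := phi_countable (S := S) (α := α) hβ
  haveI := phi_countable (S := S') (α := α) hβ
  haveI := phi_nonempty (S := S) hαβ
  haveI := phi_nonempty (S := S') hαβ
  by_cases hα : α ∈ S
  · exact iso_of_bot (phiBot hα hαβ) (phiBot (hiff.mp hα) hαβ)
      (phiBot_le hα hαβ) (phiBot_le (hiff.mp hα) hαβ)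
  · haveI := phi_noMin (β := β) hα
    haveI := phi_noMin (β := β) (fun h => hα (hiff.mpr h))
    exact Order.iso_of_countable_dense _ _

section Club

lemma omega1_pos : (0 : Ordinal) < omega1 := by
  rw [omega1, Cardinal.lt_ord, Ordinal.card_zero]
  exact Cardinal.aleph_pos 1

variable {C : Set Ordinal}

/-- the next element of `C` strictly above `c`. -/
def nxt (C : Set Ordinal) (c : Ordinal) : Ordinal := sInf {d | d ∈ C ∧ c < d}

/-- the largest element of `insert 0 C` below `γ`. -/
def prj (C : Set Ordinal) (γ : Ordinal) : Ordinal := sSup (insert 0 C ∩ Iic γ)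

lemma nxt_mem (hC : IsClubOmega1 C) {c : Ordinal} (hc : c < omega1) :
    nxt C c ∈ C ∧ c < nxt C c := by
  have hne : {d | d ∈ C ∧ c < d}.Nonempty := by
    obtain ⟨d, hd, hcd⟩ := hC.2.1 c hc
    exact ⟨d, hd, hcd⟩
  exact csInf_mem hne

lemma nxt_lt (hC : IsClubOmega1 C) {c : Ordinal} (hc : c < omega1) : nxt C c < omega1 :=
  hC.1 _ (nxt_mem hC hc).1

lemma nxt_le {c d : Ordinal} (hd : d ∈ C) (hcd : c < d) : nxt C c ≤ d :=
  csInf_le' ⟨hd, hcd⟩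

lemma prj_le {γ : Ordinal} : prj C γ ≤ γ :=
  csSup_le ⟨0, mem_insert 0 C, zero_le (a := γ)⟩ fun _ hx => hx.2

lemma le_prj {γ d : Ordinal} (hd : d ∈ insert 0 C) (hdγ : d ≤ γ) : d ≤ prj C γ :=
  le_csSup ⟨γ, fun _ hx => hx.2⟩ ⟨hd, hdγ⟩

lemma prj_mem (hC : IsClubOmega1 C) {γ : Ordinal} (hγ : γ < omega1) : prj C γ ∈ insert 0 C := by
  rcases eq_empty_or_nonempty (C ∩ Iic γ) with hE | hne'
  · have hz : prj C γ = 0 := by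
      refine le_antisymm (csSup_le ⟨0, mem_insert 0 C, zero_le (a := γ)⟩ ?_) (zero_le (a := _))
      rintro x ⟨hx1, hx2⟩
      rcases hx1 with rfl | hx1
      · exact le_rfl
      · exact absurd (mem_inter hx1 hx2) (by rw [hE]; exact notMem_empty x)
    rw [hz]; exact mem_insert 0 C
  · have hXeq : insert 0 C ∩ Iic γ = insert 0 (C ∩ Iic γ) := by
      ext x
      simp only [mem_inter_iff, mem_insert_iff, mem_Iic]
      constructor
      · rintro ⟨rfl | hx, hx2⟩
        · exact Or.inl rfl
        · exact Or.inr ⟨hx, hx2⟩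
      · rintro (rfl | ⟨hx, hx2⟩)
        · exact ⟨Or.inl rfl, zero_le (a := γ)⟩
        · exact ⟨Or.inr hx, hx2⟩
    have hbdd : BddAbove (C ∩ Iic γ) := ⟨γ, fun _ hx => hx.2⟩
    have h2 : prj C γ = sSup (C ∩ Iic γ) := by
      rw [prj, hXeq, csSup_insert hbdd hne']
      exact sup_eq_right.mpr (zero_le (a := _))
    have h3 : sSup (C ∩ Iic γ) < omega1 :=
      lt_of_le_of_lt (csSup_le hne' fun _ hx => hx.2) hγ
    rw [h2]
    exact mem_insert_of_mem 0 (hC.2.2 _ inter_subset_left hne' h3)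

lemma lt_nxt_prj (hC : IsClubOmega1 C) {γ : Ordinal} (hγ : γ < omega1) : γ < nxt C (prj C γ) := by
  by_contra hcon
  push_neg at hcon
  have h1 : nxt C (prj C γ) ∈ C := (nxt_mem hC (lt_of_le_of_lt prj_le hγ)).1
  have h2 : nxt C (prj C γ) ≤ prj C γ := le_prj (mem_insert_of_mem 0 h1) hcon
  exact absurd (nxt_mem hC (lt_of_le_of_lt prj_le hγ)).2 (not_lt.mpr h2)

end Club

section Regroup

lemma lex_lt_left {ι : Type u} [LinearOrder ι] {A : ι → Type v} [∀ i, LinearOrder (A i)]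
    {i j : ι} (x : A i) (y : A j) (h : i < j) :
    (toLex ⟨i, x⟩ : Lex (Σ i, A i)) < toLex ⟨j, y⟩ :=
  @Sigma.Lex.left ι A (· < ·) (fun _ => (· < ·)) i j x y h

lemma mem_insert0_lt {C : Set Ordinal} (hC : IsClubOmega1 C) (c : ↥(insert 0 C)) : c.1 < omega1 := by
  obtain ⟨c, hc⟩ := c
  rcases hc with rfl | hc
  · exact omega1_pos
  · exact hC.1 _ hc

def flatten (T : Set Ordinal) {C : Set Ordinal} (hC : IsClubOmega1 C) :
    Lex (Σ c : ↥(insert 0 C), Phi T c.1 (nxt C c.1)) → Phi T 0 omega1 :=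
  fun z => toLex ⟨⟨(ofLex (ofLex z).2).1.1,
    ⟨zero_le (a := _),
      lt_trans (ofLex (ofLex z).2).1.2.2 (nxt_lt hC (mem_insert0_lt hC (ofLex z).1))⟩⟩,
    (ofLex (ofLex z).2).2⟩

lemma regroup (T : Set Ordinal) {C : Set Ordinal} (hC : IsClubOmega1 C) :
    Nonempty ((Lex (Σ c : ↥(insert 0 C), Phi T c.1 (nxt C c.1))) ≃o Phi T 0 omega1) := by
  classical
  have hmono : StrictMono (flatten T hC) := by
    rintro ⟨c₁, a⟩ ⟨c₂, b⟩ hab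
    have h' : c₁ < c₂ ∨ ∃ e : c₁ = c₂, (e.rec a : Phi T c₂.1 (nxt C c₂.1)) < b :=
      Sigma.lex_iff.mp (show Sigma.Lex (· < ·) (fun _ => (· < ·))
        (⟨c₁, a⟩ : Σ c : ↥(insert 0 C), Phi T c.1 (nxt C c.1)) ⟨c₂, b⟩ from hab)
    rcases h' with hij | ⟨e, hab2⟩
    · -- different blocks
      obtain ⟨⟨γ₁, hγ₁⟩, x⟩ := a
      obtain ⟨⟨γ₂, hγ₂⟩, y⟩ := b
      refine phi_lt_left _ _ ?_
      have h2 : nxt C c₁.1 ≤ c₂.1 := by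
        have hc₂ : c₂.1 ∈ C := by
          rcases c₂.2 with h0 | hmem
          · exact absurd (lt_of_lt_of_le (show (c₁ : Ordinal) < (c₂ : Ordinal) from hij)
              (le_of_eq h0)) (not_lt_of_ge (zero_le (a := _)))
          · exact hmem
        exact nxt_le hc₂ hij
      exact lt_of_lt_of_le hγ₁.2 (le_trans h2 hγ₂.1)
    · subst e
      have hab3 : a < b := hab2
      obtain ⟨⟨γ₁, hγ₁⟩, x⟩ := a
      obtain ⟨⟨γ₂, hγ₂⟩, y⟩ := b
      rcases phi_lt_cases hab3 with hij | ⟨he, hxy⟩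
      · exact phi_lt_left _ _ hij
      · have hγe : γ₁ = γ₂ := congrArg Subtype.val he
        subst hγe
        exact phi_lt_right (eta_lt_def.mpr hxy)
  have hsurj : Function.Surjective (flatten T hC) := by
    rintro ⟨⟨γ, hγ⟩, x⟩
    exact ⟨toLex ⟨⟨prj C γ, prj_mem hC hγ.2⟩,
      toLex ⟨⟨γ, ⟨prj_le, lt_nxt_prj hC hγ.2⟩⟩, x⟩⟩, rfl⟩
  exact ⟨hmono.orderIsoOfSurjective _ hsurj⟩

end Regroup

theorem stmt0 (S S' : Set Ordinal)
    (hS : ∀ γ ∈ S, γ < omega1 ∧ Order.IsSuccLimit γ)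
    (hS' : ∀ γ ∈ S', γ < omega1 ∧ Order.IsSuccLimit γ)
    (h : ∃ C : Set Ordinal, IsClubOmega1 C ∧ C ∩ (symmDiff S S') = ∅) :
    Nonempty (Phi S 0 omega1 ≃o Phi S' 0 omega1) := by
  obtain ⟨C, hC, hdisj⟩ := h
  obtain ⟨e1⟩ := regroup S hC
  obtain ⟨e2⟩ := regroup S' hC
  have hblocks : ∀ c : ↥(insert 0 C),
      Nonempty (Phi S c.1 (nxt C c.1) ≃o Phi S' c.1 (nxt C c.1)) := by
    rintro ⟨c, hc⟩
    have hcω : c < omega1 := mem_insert0_lt hC ⟨c, hc⟩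
    have hiff : c ∈ S ↔ c ∈ S' := by
      rcases hc with rfl | hc
      · constructor
        · intro h0; exact absurd (hS 0 h0).2 Ordinal.not_isSuccLimit_zero
        · intro h0; exact absurd (hS' 0 h0).2 Ordinal.not_isSuccLimit_zero
      · have hns : c ∉ symmDiff S S' := fun hmem =>
          (eq_empty_iff_forall_notMem.mp hdisj c) (mem_inter hc hmem)
        rw [Set.mem_symmDiff] at hns
        push_neg at hns
        exact ⟨hns.1, hns.2⟩
    exact blockIso (nxt_mem hC hcω).2 (nxt_lt hC hcω) hiff
  have e3 : ∀ c : ↥(insert 0 C), Phi S c.1 (nxt C c.1) ≃o Phi S' c.1 (nxt C c.1) :=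
    fun c => Classical.choice (hblocks c)
  exact ⟨(e1.symm.trans (sigmaLexCongr e3)).trans e2⟩
end
end

section
/- Let S and S' be sets of countable limit ordinals. Then Φ(S) and Φ(S') are order-isomorphic if and only if S Δ S' is nonstationary in ω₁ (i.e. there is a closed unbounded C ⊆ ω₁ disjoint from S Δ S'). -/
noncomputable section

open Set

/-- `C ⊆ ω₁` is closed unbounded. -/
def IsClub' (C : Set Ordinal) : Prop :=
  (∀ c ∈ C, c < omega1) ∧
  (∀ δ < omega1, ∃ c ∈ C, δ < c) ∧
  (∀ X ⊆ C, X.Nonempty → sSup X < omega1 → sSup X ∈ C)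

namespace Aux

variable {S : Set Ordinal} {α β : Ordinal}

def Eta.val {γ : Ordinal} (v : Eta S γ) : WithBot ℚ := Subtype.val v
def Eta.mk (γ : Ordinal) (x : WithBot ℚ) (h : γ ∈ S ∨ x ≠ ⊥) : Eta S γ := Subtype.mk x h
lemma Eta.le_iff {γ : Ordinal} {a b : Eta S γ} : a ≤ b ↔ a.val ≤ b.val := Iff.rfl
lemma Eta.lt_iff {γ : Ordinal} {a b : Eta S γ} : a < b ↔ a.val < b.val := Iff.rfl
lemma Eta.ext {γ : Ordinal} {a b : Eta S γ} (h : a.val = b.val) : a = b := Subtype.ext h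

def pmk (γ : Ordinal) (h : γ ∈ Ico α β) (v : Eta S γ) : Phi S α β := toLex ⟨⟨γ, h⟩, v⟩
def idx (x : Phi S α β) : Ordinal := (ofLex x).1.1
def pval (x : Phi S α β) : WithBot ℚ := Eta.val (S := S) (ofLex x).2
def key (x : Phi S α β) : Ordinal ×ₗ WithBot ℚ := toLex (idx x, pval x)

lemma idx_mem (x : Phi S α β) : idx x ∈ Ico α β := (ofLex x).1.2
lemma pval_mem (x : Phi S α β) : idx x ∈ S ∨ pval x ≠ ⊥ := (ofLex x).2.2

lemma lt_iff_key {x y : Phi S α β} : x < y ↔ key x < key y := by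
  obtain ⟨⟨γ₁, h₁⟩, v₁⟩ := x
  obtain ⟨⟨γ₂, h₂⟩, v₂⟩ := y
  constructor
  · intro h
    rcases (Sigma.Lex.lt_def).1 h with h' | ⟨he, hv⟩
    · exact Prod.Lex.lt_iff.2 (Or.inl (Subtype.mk_lt_mk.1 h'))
    · obtain rfl : γ₁ = γ₂ := congrArg Subtype.val he
      rw [Subsingleton.elim he rfl] at hv
      exact Prod.Lex.lt_iff.2 (Or.inr ⟨rfl, hv⟩)
  · intro h
    rcases (Prod.Lex.lt_iff).1 h with h' | ⟨he, hv⟩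
    · exact Sigma.Lex.lt_def.2 (Or.inl (Subtype.mk_lt_mk.2 h'))
    · obtain rfl : γ₁ = γ₂ := he
      exact Sigma.Lex.lt_def.2 (Or.inr ⟨rfl, hv⟩)

lemma key_injective : Function.Injective (key (S := S) (α := α) (β := β)) := by
  intro x y h
  obtain ⟨⟨γ₁, h₁⟩, v₁⟩ := x
  obtain ⟨⟨γ₂, h₂⟩, v₂⟩ := y
  have h1 : γ₁ = γ₂ := congrArg (fun p => (ofLex p).1) h
  obtain rfl := h1
  have h2 : Eta.val (S := S) v₁ = Eta.val v₂ := congrArg (fun p => (ofLex p).2) h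
  have := Eta.ext h2
  subst this
  rfl

lemma le_iff_key {x y : Phi S α β} : x ≤ y ↔ key x ≤ key y := by
  rw [← not_lt, ← not_lt, lt_iff_key]

lemma ext_key {x y : Phi S α β} (h : idx x = idx y) (h2 : pval x = pval y) : x = y :=
  key_injective (by unfold key; rw [h, h2])

lemma idx_pmk (γ : Ordinal) (h : γ ∈ Ico α β) (v : Eta S γ) : idx (pmk γ h v) = γ := rfl
lemma pval_pmk (γ : Ordinal) (h : γ ∈ Ico α β) (v : Eta S γ) : pval (pmk γ h v) = Eta.val v := rfl

lemma pmk_idx_pval (x : Phi S α β) : pmk (idx x) (idx_mem x) ⟨pval x, pval_mem x⟩ = x := by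
  exact ext_key rfl rfl




open Set
variable {S : Set Ordinal} {α β : Ordinal}

lemma lt_key_iff {x y : Phi S α β} :
    x < y ↔ idx x < idx y ∨ (idx x = idx y ∧ pval x < pval y) := by
  rw [lt_iff_key, key, key, Prod.Lex.lt_iff]
  rfl

lemma le_key_iff {x y : Phi S α β} :
    x ≤ y ↔ idx x < idx y ∨ (idx x = idx y ∧ pval x ≤ pval y) := by
  rw [le_iff_key, key, key, Prod.Lex.le_iff]
  rfl

-- more elements above within a fiber
lemma exists_val_gt (v : WithBot ℚ) : ∃ w : WithBot ℚ, v < w ∧ w ≠ ⊥ := by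
  obtain ⟨w, hw⟩ := exists_gt v
  exact ⟨w, hw, (lt_of_le_of_lt bot_le hw).ne'⟩

lemma exists_val_between {v w : WithBot ℚ} (h : v < w) :
    ∃ c : WithBot ℚ, (v < c ∧ c < w) ∧ c ≠ ⊥ := by
  obtain ⟨c, hc⟩ := exists_between h
  exact ⟨c, hc, (lt_of_le_of_lt bot_le hc.1).ne'⟩

instance {γ : Ordinal} : Nonempty (Eta S γ) := ⟨⟨(0:ℚ), Or.inr WithBot.coe_ne_bot⟩⟩
instance {γ : Ordinal} : Countable (Eta S γ) :=
  inferInstanceAs (Countable {x : WithBot ℚ // γ ∈ S ∨ x ≠ ⊥})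

lemma phi_nonempty (h : α < β) : Nonempty (Phi S α β) :=
  ⟨pmk α ⟨le_rfl, h⟩ (Classical.arbitrary _)⟩

instance : NoMaxOrder (Phi S α β) := by
  constructor
  intro x
  obtain ⟨w, hw, hwb⟩ := exists_val_gt (pval x)
  refine ⟨pmk (idx x) (idx_mem x) ⟨w, Or.inr hwb⟩, ?_⟩
  rw [lt_key_iff]
  exact Or.inr ⟨rfl, hw⟩

instance : DenselyOrdered (Phi S α β) := by
  constructor
  intro x y hxy
  rw [lt_key_iff] at hxy
  rcases hxy with h | ⟨he, hv⟩
  · obtain ⟨w, hw, hwb⟩ := exists_val_gt (pval x)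
    refine ⟨pmk (idx x) (idx_mem x) ⟨w, Or.inr hwb⟩, ?_, ?_⟩
    · rw [lt_key_iff]; exact Or.inr ⟨rfl, hw⟩
    · rw [lt_key_iff]; exact Or.inl h
  · obtain ⟨c, hc, hcb⟩ := exists_val_between hv
    refine ⟨pmk (idx x) (idx_mem x) ⟨c, Or.inr hcb⟩, ?_, ?_⟩
    · rw [lt_key_iff]; exact Or.inr ⟨rfl, hc.1⟩
    · rw [lt_key_iff]; exact Or.inr ⟨he, hc.2⟩

lemma phi_noMin (hα : α ∉ S) (x : Phi S α β) : ∃ y : Phi S α β, y < x := by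
  rcases eq_or_lt_of_le (idx_mem x).1 with he | hlt
  · have hne : pval x ≠ ⊥ := by
      rcases pval_mem x with h | h
      · exact absurd (he ▸ h) hα
      · exact h
    obtain ⟨p, hp⟩ := WithBot.ne_bot_iff_exists.1 hne
    refine ⟨pmk (idx x) (idx_mem x) ⟨((p - 1 : ℚ) : WithBot ℚ), Or.inr WithBot.coe_ne_bot⟩, ?_⟩
    rw [lt_key_iff]
    refine Or.inr ⟨rfl, ?_⟩
    show ((p - 1 : ℚ) : WithBot ℚ) < pval x
    rw [← hp, WithBot.coe_lt_coe]; linarith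
  · refine ⟨pmk α ⟨le_rfl, lt_trans hlt (idx_mem x).2⟩ (Classical.arbitrary _), ?_⟩
    rw [lt_key_iff]; exact Or.inl hlt

lemma phi_isBot (hα : α ∈ S) (h : α < β) :
    ∀ x : Phi S α β, pmk α ⟨le_rfl, h⟩ ⟨⊥, Or.inl hα⟩ ≤ x := by
  intro x
  rw [le_key_iff]
  rcases eq_or_lt_of_le (idx_mem x).1 with he | hlt
  · exact Or.inr ⟨he, bot_le⟩
  · exact Or.inl hlt

lemma omega1_pos : (0 : Ordinal) < omega1 := by
  rw [omega1, Cardinal.lt_ord, Ordinal.card_zero]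
  exact lt_trans Cardinal.aleph0_pos Cardinal.aleph0_lt_aleph_one

lemma phi_countable (hβ : β < omega1) : Countable (Phi S α β) := by
  have h1 : (Set.Iio β).Countable := by
    rw [Cardinal.countable_iff_lt_aleph_one, Ordinal.mk_Iio_ordinal, Cardinal.lift_lt_aleph_one]
    exact Cardinal.lt_ord.1 hβ
  have h2 : Countable (Ico α β) := (h1.mono Ico_subset_Iio_self).to_subtype
  exact inferInstanceAs (Countable (Σ γ : Ico α β, Eta S γ.1))




open Set
variable {S S' : Set Ordinal} {α β : Ordinal}

section ext
variable {X Y : Type*} [LinearOrder X] [LinearOrder Y]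

/-- Extend an isomorphism of the strict upper parts to full orders with bottoms. -/
def extendBot (x₀ : X) (y₀ : Y) (hx : ∀ x, x₀ ≤ x) (hy : ∀ y, y₀ ≤ y)
    (e : {x : X // x₀ < x} ≃o {y : Y // y₀ < y}) : X ≃o Y where
  toFun x := if h : x₀ < x then (e ⟨x, h⟩).1 else y₀
  invFun y := if h : y₀ < y then (e.symm ⟨y, h⟩).1 else x₀
  left_inv x := by
    by_cases h : x₀ < x
    · simp only [dif_pos h, (e ⟨x, h⟩).2, dif_pos]
      rw [show (⟨(e ⟨x, h⟩).1, (e ⟨x, h⟩).2⟩ : {y : Y // y₀ < y}) = e ⟨x, h⟩ from rfl,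
        OrderIso.symm_apply_apply]
    · simp only [dif_neg h, lt_irrefl, dif_neg, not_false_iff]
      exact ((hx x).antisymm (not_lt.1 h)).symm ▸ rfl
  right_inv y := by
    by_cases h : y₀ < y
    · simp only [dif_pos h, (e.symm ⟨y, h⟩).2, dif_pos]
      rw [show (⟨(e.symm ⟨y, h⟩).1, (e.symm ⟨y, h⟩).2⟩ : {x : X // x₀ < x}) = e.symm ⟨y, h⟩ from rfl,
        OrderIso.apply_symm_apply]
    · simp only [dif_neg h, lt_irrefl, dif_neg, not_false_iff]
      exact ((hy y).antisymm (not_lt.1 h)).symm ▸ rfl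
  map_rel_iff' := by
    intro a b
    simp only [Equiv.coe_fn_mk]
    by_cases ha : x₀ < a <;> by_cases hb : x₀ < b
    · rw [dif_pos ha, dif_pos hb]
      rw [show ((e ⟨a, ha⟩).1 ≤ (e ⟨b, hb⟩).1) ↔ (e ⟨a, ha⟩ ≤ e ⟨b, hb⟩) from Iff.rfl,
        e.le_iff_le]
      exact Subtype.mk_le_mk
    · rw [dif_pos ha, dif_neg hb]
      have h1 : ¬ ((e ⟨a, ha⟩).1 ≤ y₀) := not_le.2 (e ⟨a, ha⟩).2
      have h2 : ¬ (a ≤ b) := by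
        intro hab
        exact hb (lt_of_lt_of_le ha hab)
      simp [h1, h2]
    · rw [dif_neg ha, dif_pos hb]
      simp only [hy _, true_iff]
      exact ((hx a).antisymm (not_lt.1 ha)) ▸ hx b
    · rw [dif_neg ha, dif_neg hb]
      have : a = b := ((hx a).antisymm (not_lt.1 ha)).symm.trans ((hx b).antisymm (not_lt.1 hb))
      simp [this]

end ext

section cdlo
variable {X : Type*} [LinearOrder X] [DenselyOrdered X] [NoMaxOrder X]

lemma upper_denselyOrdered (x₀ : X) : DenselyOrdered {x : X // x₀ < x} := by
  constructor
  rintro ⟨a, ha⟩ ⟨b, hb⟩ hab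
  obtain ⟨c, hc1, hc2⟩ := exists_between (show a < b from hab)
  exact ⟨⟨c, ha.trans hc1⟩, hc1, hc2⟩

lemma upper_noMax (x₀ : X) : NoMaxOrder {x : X // x₀ < x} := by
  constructor
  rintro ⟨a, ha⟩
  obtain ⟨b, hb⟩ := exists_gt a
  exact ⟨⟨b, ha.trans hb⟩, hb⟩

lemma upper_noMin (x₀ : X) : NoMinOrder {x : X // x₀ < x} := by
  constructor
  rintro ⟨a, ha⟩
  obtain ⟨c, hc1, hc2⟩ := exists_between ha
  exact ⟨⟨c, hc1⟩, hc2⟩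

end cdlo

/-- Two countable dense orders with no max, with bottoms, and nontrivial, are isomorphic. -/
lemma iso_of_bot {X Y : Type*} [LinearOrder X] [LinearOrder Y] [Countable X] [Countable Y]
    [DenselyOrdered X] [DenselyOrdered Y] [NoMaxOrder X] [NoMaxOrder Y]
    (x₀ : X) (y₀ : Y) (hx : ∀ x, x₀ ≤ x) (hy : ∀ y, y₀ ≤ y)
    (hX : ∃ x : X, x ≠ x₀) (hY : ∃ y : Y, y ≠ y₀) : Nonempty (X ≃o Y) := by
  haveI := upper_denselyOrdered x₀
  haveI := upper_denselyOrdered y₀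
  haveI := upper_noMax x₀
  haveI := upper_noMax y₀
  haveI := upper_noMin x₀
  haveI := upper_noMin y₀
  haveI : Nonempty {x : X // x₀ < x} := by
    obtain ⟨x, hx'⟩ := hX
    exact ⟨⟨x, (hx x).lt_of_ne (Ne.symm hx')⟩⟩
  haveI : Nonempty {y : Y // y₀ < y} := by
    obtain ⟨y, hy'⟩ := hY
    exact ⟨⟨y, (hy y).lt_of_ne (Ne.symm hy')⟩⟩
  obtain ⟨e⟩ := Order.iso_of_countable_dense (α := {x : X // x₀ < x}) (β := {y : Y // y₀ < y})
  exact ⟨extendBot x₀ y₀ hx hy e⟩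

/-- The classification of the blocks. -/
lemma iso_pieces (hSb : α ∈ S ↔ α ∈ S') (hαβ : α < β) (hβ : β < omega1) :
    Nonempty (Phi S α β ≃o Phi S' α β) := by
  haveI := phi_countable (S := S) (α := α) hβ
  haveI := phi_countable (S := S') (α := α) hβ
  haveI := phi_nonempty (S := S) (α := α) hαβ
  haveI := phi_nonempty (S := S') (α := α) hαβ
  by_cases hα : α ∈ S
  · have hα' : α ∈ S' := hSb.1 hα
    refine iso_of_bot _ _ (phi_isBot hα hαβ) (phi_isBot hα' hαβ) ?_ ?_
    · refine ⟨pmk α ⟨le_rfl, hαβ⟩ ⟨((0:ℚ) : WithBot ℚ), Or.inr WithBot.coe_ne_bot⟩, ?_⟩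
      intro h
      have := congrArg pval h
      change ((0:ℚ) : WithBot ℚ) = ⊥ at this
      exact WithBot.coe_ne_bot this
    · refine ⟨pmk α ⟨le_rfl, hαβ⟩ ⟨((0:ℚ) : WithBot ℚ), Or.inr WithBot.coe_ne_bot⟩, ?_⟩
      intro h
      have := congrArg pval h
      change ((0:ℚ) : WithBot ℚ) = ⊥ at this
      exact WithBot.coe_ne_bot this
  · have hα' : α ∉ S' := fun h => hα (hSb.2 h)
    haveI : NoMinOrder (Phi S α β) := ⟨phi_noMin hα⟩
    haveI : NoMinOrder (Phi S' α β) := ⟨phi_noMin hα'⟩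
    exact Order.iso_of_countable_dense _ _




open Set
variable {S S' : Set Ordinal}

/-- Reinterpret an element in a different interval. -/
def relocate {S : Set Ordinal} {α β α' β' : Ordinal} (x : Phi S α β)
    (h1 : α' ≤ idx x) (h2 : idx x < β') : Phi S α' β' :=
  pmk (idx x) ⟨h1, h2⟩ ⟨pval x, pval_mem x⟩

@[simp] lemma idx_relocate {S : Set Ordinal} {α β α' β' : Ordinal} (x : Phi S α β)
    (h1 : α' ≤ idx x) (h2 : idx x < β') : idx (relocate x h1 h2 : Phi S α' β') = idx x := rfl

@[simp] lemma pval_relocate {S : Set Ordinal} {α β α' β' : Ordinal} (x : Phi S α β)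
    (h1 : α' ≤ idx x) (h2 : idx x < β') : pval (relocate x h1 h2 : Phi S α' β') = pval x := rfl

lemma relocate_relocate {S : Set Ordinal} {α β α' β' α'' β'' : Ordinal} (x : Phi S α β)
    (h1 : α' ≤ idx x) (h2 : idx x < β') (h3 h4) (h5 : α'' ≤ idx x) (h6 : idx x < β'') :
    relocate (relocate x h1 h2 : Phi S α' β') h3 h4 = (relocate x h5 h6 : Phi S α'' β'') :=
  ext_key rfl rfl

lemma relocate_self {S : Set Ordinal} {α β : Ordinal} (x : Phi S α β)
    (h1 : α ≤ idx x) (h2 : idx x < β) : relocate x h1 h2 = x :=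
  ext_key rfl rfl

lemma relocate_lt_relocate_iff {S : Set Ordinal} {α β α' β' α'' β'' : Ordinal}
    {x : Phi S α β} {y : Phi S α' β'} {h1 h2 h3 h4} :
    (relocate x h1 h2 : Phi S α'' β'') < relocate y h3 h4 ↔
      idx x < idx y ∨ (idx x = idx y ∧ pval x < pval y) :=
  lt_key_iff

def glueFun (D : Set Ordinal) (nxt blk : Ordinal → Ordinal)
    (hblk_mem : ∀ γ, γ < omega1 → blk γ ∈ D)
    (hblk_le : ∀ γ, γ < omega1 → blk γ ≤ γ)
    (hblk_lt : ∀ γ, γ < omega1 → γ < nxt (blk γ))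
    (hnxt_lt : ∀ b, b ∈ D → nxt b < omega1)
    (e : ∀ b, b ∈ D → (Phi S b (nxt b) ≃o Phi S' b (nxt b)))
    (x : Phi S 0 omega1) : Phi S' 0 omega1 :=
  relocate (e (blk (idx x)) (hblk_mem _ (idx_mem x).2)
      (relocate x (hblk_le _ (idx_mem x).2) (hblk_lt _ (idx_mem x).2)))
    (zero_le)
    (lt_trans (idx_mem _).2 (hnxt_lt _ (hblk_mem _ (idx_mem x).2)))

lemma glueFun_eq (D : Set Ordinal) (nxt blk : Ordinal → Ordinal)
    (hblk_mem : ∀ γ, γ < omega1 → blk γ ∈ D)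
    (hblk_le : ∀ γ, γ < omega1 → blk γ ≤ γ)
    (hblk_lt : ∀ γ, γ < omega1 → γ < nxt (blk γ))
    (hnxt_lt : ∀ b, b ∈ D → nxt b < omega1)
    (e : ∀ b, b ∈ D → (Phi S b (nxt b) ≃o Phi S' b (nxt b)))
    (x : Phi S 0 omega1) (b : Ordinal) (hb : blk (idx x) = b) (hbD : b ∈ D)
    (h1 : b ≤ idx x) (h2 : idx x < nxt b)
    (h3 : (0 : Ordinal) ≤ idx (e b hbD (relocate x h1 h2)))
    (h4 : idx (e b hbD (relocate x h1 h2)) < omega1) :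
    glueFun D nxt blk hblk_mem hblk_le hblk_lt hnxt_lt e x
      = relocate (e b hbD (relocate x h1 h2)) h3 h4 := by
  subst hb
  rfl

lemma main_glue (D : Set Ordinal) (nxt blk : Ordinal → Ordinal)
    (hblk_mem : ∀ γ, γ < omega1 → blk γ ∈ D)
    (hblk_le : ∀ γ, γ < omega1 → blk γ ≤ γ)
    (hblk_lt : ∀ γ, γ < omega1 → γ < nxt (blk γ))
    (hblk_mono : ∀ γ γ', γ ≤ γ' → blk γ ≤ blk γ')
    (hnxt_lt : ∀ b, b ∈ D → nxt b < omega1)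
    (hnxt_le : ∀ b, ∀ b' ∈ D, b < b' → nxt b ≤ b')
    (hblk_eq : ∀ b ∈ D, ∀ γ, b ≤ γ → γ < nxt b → blk γ = b)
    (e : ∀ b, b ∈ D → (Phi S b (nxt b) ≃o Phi S' b (nxt b))) :
    Nonempty (Phi S 0 omega1 ≃o Phi S' 0 omega1) := by
  set f := glueFun D nxt blk hblk_mem hblk_le hblk_lt hnxt_lt e with hf
  have hmono : StrictMono f := by
    intro x y hxy
    have hxyle : idx x ≤ idx y := by
      rcases lt_key_iff.1 hxy with h | ⟨h, _⟩
      · exact h.le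
      · exact le_of_eq h
    have hbb : blk (idx x) ≤ blk (idx y) := hblk_mono _ _ hxyle
    have hDx : blk (idx x) ∈ D := hblk_mem _ (idx_mem x).2
    have hDy : blk (idx y) ∈ D := hblk_mem _ (idx_mem y).2
    rw [hf]
    rcases eq_or_lt_of_le hbb with hbe | hblt
    · have hle2 : blk (idx x) ≤ idx y := by rw [hbe]; exact hblk_le _ (idx_mem y).2
      have hlt2 : idx y < nxt (blk (idx x)) := by rw [hbe]; exact hblk_lt _ (idx_mem y).2
      rw [glueFun_eq D nxt blk hblk_mem hblk_le hblk_lt hnxt_lt e x (blk (idx x)) rfl hDx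
          (hblk_le _ (idx_mem x).2) (hblk_lt _ (idx_mem x).2) (zero_le)
          (lt_trans (idx_mem _).2 (hnxt_lt _ hDx)),
        glueFun_eq D nxt blk hblk_mem hblk_le hblk_lt hnxt_lt e y (blk (idx x)) hbe.symm hDx
          hle2 hlt2 (zero_le) (lt_trans (idx_mem _).2 (hnxt_lt _ hDx))]
      rw [relocate_lt_relocate_iff, ← lt_key_iff]
      apply (e (blk (idx x)) hDx).lt_iff_lt.2
      rw [relocate_lt_relocate_iff, ← lt_key_iff]
      exact hxy
    · rw [glueFun_eq D nxt blk hblk_mem hblk_le hblk_lt hnxt_lt e x (blk (idx x)) rfl hDx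
          (hblk_le _ (idx_mem x).2) (hblk_lt _ (idx_mem x).2) (zero_le)
          (lt_trans (idx_mem _).2 (hnxt_lt _ hDx)),
        glueFun_eq D nxt blk hblk_mem hblk_le hblk_lt hnxt_lt e y (blk (idx y)) rfl hDy
          (hblk_le _ (idx_mem y).2) (hblk_lt _ (idx_mem y).2) (zero_le)
          (lt_trans (idx_mem _).2 (hnxt_lt _ hDy))]
      rw [relocate_lt_relocate_iff]
      left
      calc idx (e (blk (idx x)) hDx _) < nxt (blk (idx x)) := (idx_mem _).2
        _ ≤ blk (idx y) := hnxt_le _ _ hDy hblt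
        _ ≤ idx (e (blk (idx y)) hDy _) := (idx_mem _).1
  have hsurj : Function.Surjective f := by
    intro y
    have hby : blk (idx y) ∈ D := hblk_mem _ (idx_mem y).2
    set x' := (e (blk (idx y)) hby).symm
      (relocate y (hblk_le _ (idx_mem y).2) (hblk_lt _ (idx_mem y).2)) with hx'
    have hx'mem := Set.mem_Ico.1 (idx_mem x')
    refine ⟨relocate x' (zero_le) (lt_trans hx'mem.2 (hnxt_lt _ hby)), ?_⟩
    rw [hf]
    have hblkx : blk (idx (relocate x' (zero_le)
        (lt_trans hx'mem.2 (hnxt_lt _ hby)) : Phi S 0 omega1)) = blk (idx y) := by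
      rw [idx_relocate]
      exact hblk_eq _ hby _ hx'mem.1 hx'mem.2
    rw [glueFun_eq D nxt blk hblk_mem hblk_le hblk_lt hnxt_lt e _ (blk (idx y)) hblkx hby
        hx'mem.1 hx'mem.2
        (zero_le) (lt_trans (idx_mem _).2 (hnxt_lt _ hby))]
    have hr : ∀ h1 h2, (relocate (relocate x' zero_le (lt_trans hx'mem.2 (hnxt_lt _ hby)) :
        Phi S 0 omega1) h1 h2 : Phi S (blk (idx y)) (nxt (blk (idx y)))) = x' :=
      fun h1 h2 => ext_key rfl rfl
    have hz : (e (blk (idx y)) hby) (relocate (relocate x' zero_le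
        (lt_trans hx'mem.2 (hnxt_lt _ hby)) : Phi S 0 omega1) hx'mem.1 hx'mem.2)
        = relocate y (hblk_le _ (idx_mem y).2) (hblk_lt _ (idx_mem y).2) := by
      exact (congrArg (e (blk (idx y)) hby) (hr _ _)).trans
        (by rw [hx']; exact OrderIso.apply_symm_apply _ _)
    have hz1 := congrArg idx hz
    have hz2 := congrArg pval hz
    exact ext_key hz1 hz2
  exact ⟨StrictMono.orderIsoOfSurjective f hmono hsurj⟩




open Set

lemma backward (S S' : Set Ordinal)
    (hS : ∀ γ ∈ S, γ < omega1 ∧ Order.IsSuccLimit γ)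
    (hS' : ∀ γ ∈ S', γ < omega1 ∧ Order.IsSuccLimit γ)
    (C : Set Ordinal) (hC : IsClub' C) (hdisj : C ∩ symmDiff S S' = ∅) :
    Nonempty (Phi S 0 omega1 ≃o Phi S' 0 omega1) := by
  classical
  set D : Set Ordinal := insert 0 C with hD
  set nxt : Ordinal → Ordinal := fun b => sInf {c | c ∈ C ∧ b < c} with hnxt
  set blk : Ordinal → Ordinal :=
    fun γ => if h : (C ∩ Iic γ).Nonempty then sSup (C ∩ Iic γ) else 0 with hblk
  have hDlt : ∀ b ∈ D, b < omega1 := by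
    rintro b (rfl | hb)
    · exact omega1_pos
    · exact hC.1 b hb
  have hnxt_spec : ∀ b, b < omega1 → nxt b ∈ C ∧ b < nxt b := by
    intro b hb
    obtain ⟨c, hc, hbc⟩ := hC.2.1 b hb
    exact csInf_mem (s := {c | c ∈ C ∧ b < c}) ⟨c, hc, hbc⟩
  have hnxt_lt : ∀ b ∈ D, nxt b < omega1 := by
    intro b hb
    exact hC.1 _ (hnxt_spec b (hDlt b hb)).1
  have hnxt_gt : ∀ b ∈ D, b < nxt b := fun b hb => (hnxt_spec b (hDlt b hb)).2
  have hnxt_le : ∀ b, ∀ b' ∈ D, b < b' → nxt b ≤ b' := by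
    rintro b b' (rfl | hb') hlt
    · exact absurd hlt (not_lt_zero (a := b))
    · exact csInf_le (s := {c | c ∈ C ∧ b < c}) (OrderBot.bddBelow _) ⟨hb', hlt⟩
  have hbdd : ∀ γ : Ordinal, BddAbove (C ∩ Iic γ) := fun γ => ⟨γ, fun c hc => hc.2⟩
  have hblk_le : ∀ γ, γ < omega1 → blk γ ≤ γ := by
    intro γ _
    simp only [hblk]
    split_ifs with h
    · exact csSup_le h fun c hc => hc.2
    · exact zero_le
  have hblk_mem : ∀ γ, γ < omega1 → blk γ ∈ D := by
    intro γ hγ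
    simp only [hblk]
    split_ifs with h
    · exact mem_insert_of_mem _
        (hC.2.2 _ inter_subset_left h (lt_of_le_of_lt (csSup_le h fun c hc => hc.2) hγ))
    · exact mem_insert _ _
  have hbetween : ∀ γ, ∀ d ∈ D, d ≤ γ → d ≤ blk γ := by
    rintro γ d (rfl | hd) hdγ
    · exact zero_le
    · simp only [hblk]
      rw [dif_pos ⟨d, hd, hdγ⟩]
      exact le_csSup (hbdd γ) ⟨hd, hdγ⟩
  have hblk_lt : ∀ γ, γ < omega1 → γ < nxt (blk γ) := by
    intro γ hγ
    have h1 := hnxt_spec (blk γ) (lt_of_le_of_lt (hblk_le γ hγ) hγ)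
    by_contra hcon
    push_neg at hcon
    exact absurd (hbetween γ (nxt (blk γ)) (mem_insert_of_mem _ h1.1) hcon) (not_le.2 h1.2)
  have hblk_mono : ∀ γ γ', γ ≤ γ' → blk γ ≤ blk γ' := by
    intro γ γ' hγγ'
    simp only [hblk]
    split_ifs with h h'
    · exact csSup_le_csSup (hbdd γ') h fun c hc => ⟨hc.1, le_trans hc.2 hγγ'⟩
    · obtain ⟨c, hc⟩ := h
      exact absurd ⟨c, Set.mem_inter hc.1 (le_trans hc.2 hγγ')⟩ h'
    · exact zero_le
    · exact zero_le
  have hblk_eq : ∀ b ∈ D, ∀ γ, b ≤ γ → γ < nxt b → blk γ = b := by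
    intro b hb γ hbγ hγn
    have hcle : ∀ c ∈ C ∩ Iic γ, c ≤ b := by
      rintro c ⟨hc, hcγ⟩
      by_contra hcon
      push_neg at hcon
      exact absurd (le_trans (csInf_le (s := {c | c ∈ C ∧ b < c}) (OrderBot.bddBelow _) ⟨hc, hcon⟩) hcγ) (not_le.2 hγn)
    rcases hb with rfl | hbC
    · simp only [hblk]
      split_ifs with h
      · exact le_antisymm (csSup_le h hcle) (zero_le)
      · rfl
    · simp only [hblk]
      rw [dif_pos ⟨b, hbC, hbγ⟩]
      exact le_antisymm (csSup_le ⟨b, hbC, hbγ⟩ hcle) (le_csSup (hbdd γ) ⟨hbC, hbγ⟩)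
  have hSb : ∀ b ∈ D, (b ∈ S ↔ b ∈ S') := by
    rintro b (rfl | hbC)
    · constructor
      · intro h; exact absurd (hS 0 h).2 Ordinal.not_isSuccLimit_zero
      · intro h; exact absurd (hS' 0 h).2 Ordinal.not_isSuccLimit_zero
    · have hnm : b ∉ symmDiff S S' := by
        intro hmem
        have : b ∈ C ∩ symmDiff S S' := ⟨hbC, hmem⟩
        rw [hdisj] at this
        exact this
      rw [Set.mem_symmDiff] at hnm
      push_neg at hnm
      exact ⟨hnm.1, hnm.2⟩
  have e : ∀ b, b ∈ D → (Phi S b (nxt b) ≃o Phi S' b (nxt b)) := fun b hb =>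
    (iso_pieces (hSb b hb) (hnxt_gt b hb) (hnxt_lt b hb)).some
  exact main_glue D nxt blk hblk_mem hblk_le hblk_lt hblk_mono hnxt_lt hnxt_le hblk_eq e




open Set
variable {S S' : Set Ordinal}

lemma omega1_isLimit : Order.IsSuccLimit omega1 :=
  Cardinal.isSuccLimit_ord (le_of_lt Cardinal.aleph0_lt_aleph_one)

lemma bound_lt_omega1 {ι : Type*} [Countable ι] (f : ι → Ordinal) (hf : ∀ i, f i < omega1) :
    ∃ ε, ε < omega1 ∧ ∀ i, f i ≤ ε := by
  rcases isEmpty_or_nonempty ι with h | h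
  · exact ⟨0, omega1_pos, fun i => (IsEmpty.false i).elim⟩
  · obtain ⟨g, hg⟩ := exists_surjective_nat ι
    refine ⟨iSup (f ∘ g), (by have := Ordinal.iSup_lt_omega_one (f := f ∘ g) (fun n => by rw [← Cardinal.ord_aleph]; exact hf _); rwa [← Cardinal.ord_aleph] at this), ?_⟩
    intro i
    obtain ⟨n, rfl⟩ := hg i
    exact Ordinal.le_iSup (f ∘ g) n

lemma countable_cut (δ : Ordinal) (hδ : δ < omega1) :
    Countable {x : Phi S 0 omega1 // idx x < δ} := by
  haveI := phi_countable (S := S) (α := 0) hδ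
  have hinj : Function.Injective
      (fun x : {x : Phi S 0 omega1 // idx x < δ} =>
        (relocate x.1 (zero_le) x.2 : Phi S 0 δ)) := by
    intro a b h
    dsimp only at h
    have h1 := congrArg idx h
    have h2 := congrArg pval h
    rw [idx_relocate, idx_relocate] at h1
    rw [pval_relocate, pval_relocate] at h2
    exact Subtype.ext (ext_key h1 h2)
  exact hinj.countable

/-- If `F` maps the cut below `α` onto the cut below `α`, and `α ∈ S`, then `α ∈ S'`. -/
lemma forward_disj (F : Phi S 0 omega1 ≃o Phi S' 0 omega1) (α : Ordinal) (hlt : α < omega1)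
    (himg : F '' {x | idx x < α} = {y : Phi S' 0 omega1 | idx y < α}) (hαS : α ∈ S) :
    α ∈ S' := by
  by_contra hαS'
  set m : Phi S 0 omega1 := pmk α ⟨zero_le, hlt⟩ ⟨⊥, Or.inl hαS⟩ with hm
  have hidxm : idx m = α := rfl
  have claim1 : ∀ z : Phi S 0 omega1, ¬(idx z < α) → m ≤ z := by
    intro z hz
    rw [le_key_iff]
    rcases eq_or_lt_of_le (not_lt.1 hz) with he | hlt'
    · exact Or.inr ⟨he, bot_le⟩
    · exact Or.inl (lt_of_le_of_lt (le_of_eq hidxm) hlt')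
  have claim2 : ∀ w : Phi S' 0 omega1, ¬(idx w < α) → F m ≤ w := by
    intro w hw
    have hsymm : ¬(idx (F.symm w) < α) := by
      intro hcon
      apply hw
      have : w ∈ F '' {x | idx x < α} := ⟨F.symm w, hcon, F.apply_symm_apply w⟩
      rw [himg] at this
      exact this
    have := claim1 (F.symm w) hsymm
    calc F m ≤ F (F.symm w) := F.le_iff_le.2 this
      _ = w := F.apply_symm_apply w
  -- F m has index α
  have hFm_not : ¬(idx (F m) < α) := by
    intro hcon
    have : F m ∈ F '' {x | idx x < α} := by rw [himg]; exact hcon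
    obtain ⟨x, hx, hxe⟩ := this
    have : x = m := F.injective hxe
    rw [this] at hx
    exact absurd (hidxm ▸ hx) (lt_irrefl α)
  have hle : F m ≤ pmk α ⟨zero_le, hlt⟩ ⟨((0:ℚ) : WithBot ℚ), Or.inr WithBot.coe_ne_bot⟩ :=
    claim2 _ (by change ¬ α < α; exact lt_irrefl α)
  rw [le_key_iff] at hle
  change idx (F m) < α ∨ idx (F m) = α ∧ pval (F m) ≤ ((0:ℚ) : WithBot ℚ) at hle
  have hidxFm : idx (F m) = α := by
    rcases hle with h | ⟨h, _⟩
    · exact absurd h hFm_not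
    · exact h
  have hpv : pval (F m) ≠ ⊥ := by
    rcases pval_mem (F m) with h | h
    · exact absurd (hidxFm ▸ h) hαS'
    · exact h
  obtain ⟨q, hq⟩ := WithBot.ne_bot_iff_exists.1 hpv
  have hlt2 : pmk α ⟨zero_le, hlt⟩
      ⟨((q - 1 : ℚ) : WithBot ℚ), Or.inr WithBot.coe_ne_bot⟩ < F m := by
    rw [lt_key_iff]
    refine Or.inr ⟨hidxFm.symm, ?_⟩
    show ((q - 1 : ℚ) : WithBot ℚ) < pval (F m)
    rw [← hq, WithBot.coe_lt_coe]
    linarith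
  exact absurd (claim2 _ (by change ¬ α < α; exact lt_irrefl α)) (not_le.2 hlt2)




open Set
variable {S S' : Set Ordinal}

lemma forward (F : Phi S 0 omega1 ≃o Phi S' 0 omega1) :
    ∃ C : Set Ordinal, IsClub' C ∧ C ∩ symmDiff S S' = ∅ := by
  classical
  set C : Set Ordinal := {δ | (0 < δ ∧ δ < omega1) ∧
    F '' {x | idx x < δ} = {y : Phi S' 0 omega1 | idx y < δ}} with hCdef
  have step : ∀ δ, δ < omega1 → ∃ ε, (δ < ε ∧ ε < omega1) ∧
      (∀ x : Phi S 0 omega1, idx x < δ → idx (F x) < ε) ∧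
      (∀ y : Phi S' 0 omega1, idx y < δ → idx (F.symm y) < ε) := by
    intro δ hδ
    haveI := countable_cut (S := S) δ hδ
    haveI := countable_cut (S := S') δ hδ
    obtain ⟨ε1, hε1, hb1⟩ := bound_lt_omega1
      (fun x : {x : Phi S 0 omega1 // idx x < δ} => idx (F x.1)) (fun x => (idx_mem _).2)
    obtain ⟨ε2, hε2, hb2⟩ := bound_lt_omega1
      (fun y : {y : Phi S' 0 omega1 // idx y < δ} => idx (F.symm y.1)) (fun y => (idx_mem _).2)
    refine ⟨Order.succ (max (max ε1 ε2) δ), ⟨?_, ?_⟩, ?_, ?_⟩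
    · exact lt_of_le_of_lt (le_max_right _ _) (Order.lt_succ _)
    · exact omega1_isLimit.succ_lt (max_lt (max_lt hε1 hε2) hδ)
    · intro x hx
      exact lt_of_le_of_lt (le_trans (hb1 ⟨x, hx⟩)
        (le_trans (le_max_left _ _) (le_max_left _ _))) (Order.lt_succ _)
    · intro y hy
      exact lt_of_le_of_lt (le_trans (hb2 ⟨y, hy⟩)
        (le_trans (le_max_right _ _) (le_max_left _ _))) (Order.lt_succ _)
  choose! G hG using step
  have hunb : ∀ δ, δ < omega1 → ∃ c ∈ C, δ < c := by
    intro δ hδ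
    set u : ℕ → Ordinal := fun n => Nat.rec (Order.succ δ) (fun _ ih => G ih) n with hu
    have husucc : ∀ n, u (n + 1) = G (u n) := fun n => rfl
    have hult : ∀ n, u n < omega1 := by
      intro n
      induction n with
      | zero => exact omega1_isLimit.succ_lt hδ
      | succ n ih => rw [husucc]; exact (hG _ ih).1.2
    have hle : ∀ n, u n ≤ iSup u := Ordinal.le_iSup u
    have hδε : δ < iSup u := lt_of_lt_of_le (Order.lt_succ δ) (hle 0)
    refine ⟨iSup u, ⟨⟨lt_of_le_of_lt (zero_le) hδε,
      (by have := Ordinal.iSup_lt_omega_one (f := u) (fun n => by rw [← Cardinal.ord_aleph]; exact hult n); rwa [← Cardinal.ord_aleph] at this)⟩, ?_⟩, hδε⟩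
    ext y
    simp only [mem_image, mem_setOf_eq]
    constructor
    · rintro ⟨x, hx, rfl⟩
      obtain ⟨n, hn⟩ := Ordinal.lt_iSup_iff.1 hx
      have := (hG _ (hult n)).2.1 x hn
      rw [← husucc] at this
      exact lt_of_lt_of_le this (hle (n+1))
    · intro hy
      obtain ⟨n, hn⟩ := Ordinal.lt_iSup_iff.1 hy
      refine ⟨F.symm y, ?_, F.apply_symm_apply y⟩
      have := (hG _ (hult n)).2.2 y hn
      rw [← husucc] at this
      exact lt_of_lt_of_le this (hle (n+1))
  have hclosed : ∀ X ⊆ C, X.Nonempty → sSup X < omega1 → sSup X ∈ C := by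
    intro X hXC ⟨x0, hx0⟩ hsup
    by_cases hmem : sSup X ∈ X
    · exact hXC hmem
    have hbddX : BddAbove X := ⟨omega1, fun a ha => le_of_lt (hXC ha).1.2⟩
    have hcof : ∀ γ : Ordinal, γ < sSup X ↔ ∃ a ∈ X, γ < a :=
      fun γ => lt_csSup_iff hbddX ⟨x0, hx0⟩
    refine ⟨⟨lt_of_lt_of_le (hXC hx0).1.1 (le_csSup hbddX hx0), hsup⟩, ?_⟩
    ext y
    simp only [mem_image, mem_setOf_eq]
    constructor
    · rintro ⟨x, hx, rfl⟩
      obtain ⟨a, ha, hxa⟩ := (hcof _).1 hx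
      have himg := (hXC ha).2
      have : F x ∈ F '' {x : Phi S 0 omega1 | idx x < a} := ⟨x, hxa, rfl⟩
      rw [himg] at this
      exact lt_of_lt_of_le this (le_csSup hbddX ha)
    · intro hy
      obtain ⟨a, ha, hya⟩ := (hcof _).1 hy
      have himg := (hXC ha).2
      have : y ∈ F '' {x : Phi S 0 omega1 | idx x < a} := by rw [himg]; exact hya
      obtain ⟨x, hx, rfl⟩ := this
      exact ⟨x, lt_of_lt_of_le hx (le_csSup hbddX ha), rfl⟩
  refine ⟨C, ⟨fun c hc => hc.1.2, hunb, hclosed⟩, ?_⟩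
  rw [eq_empty_iff_forall_notMem]
  rintro α ⟨hαC, hαd⟩
  have himg : F '' {x : Phi S 0 omega1 | idx x < α} = {y : Phi S' 0 omega1 | idx y < α} :=
    hαC.2
  have himg' : F.symm '' {y : Phi S' 0 omega1 | idx y < α} = {x : Phi S 0 omega1 | idx x < α} := by
    rw [← himg, ← Set.image_comp]
    have : (⇑F.symm ∘ ⇑F) = id := funext fun x => F.symm_apply_apply x
    rw [this, Set.image_id]
  rw [Set.mem_symmDiff] at hαd
  rcases hαd with ⟨h1, h2⟩ | ⟨h1, h2⟩
  · exact h2 (forward_disj F α hαC.1.2 himg h1)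
  · exact h2 (forward_disj F.symm α hαC.1.2 himg' h1)



end Aux

theorem stmt2 (S S' : Set Ordinal)
    (hS : ∀ γ ∈ S, γ < omega1 ∧ Order.IsSuccLimit γ)
    (hS' : ∀ γ ∈ S', γ < omega1 ∧ Order.IsSuccLimit γ) :
    Nonempty (Phi S 0 omega1 ≃o Phi S' 0 omega1) ↔
      ∃ C : Set Ordinal, IsClub' C ∧ C ∩ (symmDiff S S') = ∅ := by
  constructor
  · rintro ⟨F⟩
    exact Aux.forward F
  · rintro ⟨C, hC, hdisj⟩
    exact Aux.backward S S' hS hS' C hC hdisj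
end
end

section
/- Let S be a set of countable ordinals and let α < β < ω₁ be ordinals with α ∉ S. Then the linear order Φ(S,α,β) is order-isomorphic to ℚ. -/
noncomputable section

open Set

/- auxiliary lemmas -/
open Cardinal

lemma exists_rat_gt_wb (a : WithBot ℚ) : ∃ q : ℚ, a < (q : WithBot ℚ) := by
  cases a with
  | bot => exact ⟨0, WithBot.bot_lt_coe 0⟩
  | coe r => exact ⟨r + 1, WithBot.coe_lt_coe.mpr (lt_add_one r)⟩

lemma exists_rat_btwn_wb {a b : WithBot ℚ} (h : a < b) :
    ∃ q : ℚ, a < (q : WithBot ℚ) ∧ (q : WithBot ℚ) < b := by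
  obtain ⟨p, rfl, _⟩ := WithBot.lt_iff_exists_coe.mp h
  cases a with
  | bot => exact ⟨p - 1, WithBot.bot_lt_coe _, WithBot.coe_lt_coe.mpr (by linarith)⟩
  | coe r =>
      obtain ⟨q, hq1, hq2⟩ := exists_between (WithBot.coe_lt_coe.mp h)
      exact ⟨q, WithBot.coe_lt_coe.mpr hq1, WithBot.coe_lt_coe.mpr hq2⟩

instance inst_s4 (S : Set Ordinal) (γ : Ordinal) : Countable (Eta S γ) :=
  inferInstanceAs (Countable {x : WithBot ℚ // γ ∈ S ∨ x ≠ ⊥})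

def Eta.mk (S : Set Ordinal) (γ : Ordinal) (q : ℚ) : Eta S γ :=
  ⟨(q : WithBot ℚ), Or.inr (WithBot.coe_ne_bot)⟩

instance (S : Set Ordinal) (γ : Ordinal) : Nonempty (Eta S γ) := ⟨Eta.mk S γ 0⟩

lemma Eta.mk_lt {S : Set Ordinal} {γ : Ordinal} {q : ℚ} {x : Eta S γ}
    (h : (q : WithBot ℚ) < x.1) : Eta.mk S γ q < x := h

lemma Eta.lt_mk {S : Set Ordinal} {γ : Ordinal} {q : ℚ} {x : Eta S γ}
    (h : x.1 < (q : WithBot ℚ)) : x < Eta.mk S γ q := h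

theorem stmt4 (S : Set Ordinal) (hS : ∀ γ ∈ S, γ < omega1)
    (α β : Ordinal) (hαβ : α < β) (hβ : β < omega1) (hα : α ∉ S) :
    Nonempty (Phi S α β ≃o ℚ) := by
  have hmemα : α ∈ Ico α β := ⟨le_refl α, hαβ⟩
  -- countability of the index set
  haveI : Countable (Ico α β : Set Ordinal) := by
    have h1 : (Ico α β : Set Ordinal) ⊆ Iio β := fun x hx => hx.2
    have h2 : #(Iio β : Set Ordinal) = Cardinal.lift.{1} β.card :=
      Ordinal.mk_Iio_ordinal β
    have hcard : β.card < Cardinal.aleph 1 := by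
      rwa [← Cardinal.lt_ord]
    have hcount : β.card ≤ Cardinal.aleph0 := by
      rwa [show Cardinal.aleph 1 = Order.succ Cardinal.aleph0 from Cardinal.succ_aleph0.symm,
        Order.lt_succ_iff] at hcard
    have : #(Ico α β : Set Ordinal) ≤ Cardinal.aleph0 := by
      calc #(Ico α β : Set Ordinal) ≤ #(Iio β : Set Ordinal) := Cardinal.mk_le_mk_of_subset h1
        _ = Cardinal.lift.{1} β.card := h2
        _ ≤ Cardinal.aleph0 := by
            rw [← Cardinal.lift_aleph0.{1,0}]
            exact Cardinal.lift_le.mpr hcount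
    exact Cardinal.mk_le_aleph0_iff.mp this
  haveI : Countable (Phi S α β) :=
    inferInstanceAs (Countable (Σ γ : Ico α β, Eta S γ.1))
  haveI : Nonempty (Phi S α β) :=
    ⟨toLex ⟨⟨α, hmemα⟩, Eta.mk S α 0⟩⟩
  haveI : NoMaxOrder (Phi S α β) := by
    constructor
    rintro ⟨i, x⟩
    obtain ⟨q, hq⟩ := exists_rat_gt_wb x.1
    exact ⟨toLex ⟨i, Eta.mk S i.1 q⟩, Sigma.Lex.lt_def.mpr (Or.inr ⟨rfl, Eta.lt_mk hq⟩)⟩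
  haveI : NoMinOrder (Phi S α β) := by
    constructor
    rintro ⟨i, x⟩
    rcases hx : x.1 with _ | p
    · -- x is bottom, so i.1 ∈ S, so i.1 ≠ α, so α < i.1
      have hiS : i.1 ∈ S := by
        rcases x.2 with h | h
        · exact h
        · exact absurd hx h
      have hne : α ≠ i.1 := fun h => hα (h ▸ hiS)
      have hlt : (⟨α, hmemα⟩ : Ico α β) < i := lt_of_le_of_ne i.2.1 (by
        intro h; exact hne (Subtype.ext_iff.mp h))
      exact ⟨toLex ⟨⟨α, hmemα⟩, Eta.mk S α 0⟩, Sigma.Lex.lt_def.mpr (Or.inl hlt)⟩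
    · refine ⟨toLex ⟨i, Eta.mk S i.1 (p - 1)⟩,
        Sigma.Lex.lt_def.mpr (Or.inr ⟨rfl, Eta.mk_lt ?_⟩)⟩
      rw [hx]
      exact WithBot.coe_lt_coe.mpr (by linarith)
  haveI : DenselyOrdered (Phi S α β) := by
    constructor
    rintro ⟨i, x⟩ ⟨j, y⟩ hlt
    rcases Sigma.Lex.lt_def.mp hlt with h | ⟨h, h2⟩
    · obtain ⟨q, hq⟩ := exists_rat_gt_wb x.1
      exact ⟨toLex ⟨i, Eta.mk S i.1 q⟩,
        Sigma.Lex.lt_def.mpr (Or.inr ⟨rfl, Eta.lt_mk hq⟩),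
        Sigma.Lex.lt_def.mpr (Or.inl h)⟩
    · dsimp only at h
      subst h
      dsimp only at h2
      obtain ⟨q, hq1, hq2⟩ := exists_rat_btwn_wb (show x.1 < y.1 from h2)
      exact ⟨toLex ⟨i, Eta.mk S i.1 q⟩,
        Sigma.Lex.lt_def.mpr (Or.inr ⟨rfl, Eta.lt_mk hq1⟩),
        Sigma.Lex.lt_def.mpr (Or.inr ⟨rfl, Eta.mk_lt hq2⟩)⟩
  exact Order.iso_of_countable_dense (Phi S α β) ℚ
end
end

section
/- Let S be a set of countable ordinals and let α < β < ω₁ be ordinals with α ∈ S. Then the linear order Φ(S,α,β) is order-isomorphic to 1+ℚ, i.e. to WithBot ℚ (the rationals with a least element adjoined). -/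
noncomputable section

open Set

-- auxiliary lemmas

lemma exists_rat_btwn' {a : WithBot ℚ} {q : ℚ} (h : a < (q : WithBot ℚ)) :
    ∃ r : ℚ, a < (r : WithBot ℚ) ∧ r < q := by
  cases a with
  | bot => exact ⟨q - 1, WithBot.bot_lt_coe _, by linarith⟩
  | coe p =>
    have hpq : p < q := WithBot.coe_lt_coe.mp h
    exact ⟨(p + q) / 2, WithBot.coe_lt_coe.mpr (by linarith), by linarith⟩

lemma exists_rat_above (a : WithBot ℚ) : ∃ r : ℚ, a < (r : WithBot ℚ) := by
  cases a with
  | bot => exact ⟨0, WithBot.bot_lt_coe _⟩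
  | coe p => exact ⟨p + 1, WithBot.coe_lt_coe.mpr (by linarith)⟩

instance (S : Set Ordinal) (γ : Ordinal) : NoMaxOrder (Eta S γ) := by
  constructor
  intro a
  obtain ⟨r, hr⟩ := exists_rat_above a.1
  exact ⟨⟨(r : WithBot ℚ), Or.inr (WithBot.coe_ne_bot)⟩, hr⟩

instance (S : Set Ordinal) (γ : Ordinal) : DenselyOrdered (Eta S γ) := by
  constructor
  intro a c hac
  have h : a.1 < c.1 := hac
  obtain ⟨q, hcq, hq⟩ := WithBot.lt_iff_exists_coe.mp h
  obtain ⟨r, h1, h2⟩ := exists_rat_btwn' hq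
  refine ⟨⟨(r : WithBot ℚ), Or.inr WithBot.coe_ne_bot⟩, h1, ?_⟩
  show ((r : WithBot ℚ)) < c.1
  rw [hcq]
  exact WithBot.coe_lt_coe.mpr h2

lemma phi_noMax (S : Set Ordinal) (α β : Ordinal) : NoMaxOrder (Phi S α β) := by
  constructor
  intro x
  obtain ⟨γ, a⟩ := x
  obtain ⟨a', ha'⟩ := exists_gt a
  exact ⟨⟨γ, a'⟩, Sigma.Lex.lt_def.mpr (Or.inr ⟨rfl, ha'⟩)⟩

lemma phi_dense (S : Set Ordinal) (α β : Ordinal) : DenselyOrdered (Phi S α β) := by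
  constructor
  intro x y hxy
  obtain ⟨γ, a⟩ := x
  obtain ⟨δ, c⟩ := y
  rcases Sigma.Lex.lt_def.mp hxy with h | ⟨h, hac⟩
  · obtain ⟨a', ha'⟩ := exists_gt a
    exact ⟨⟨γ, a'⟩, Sigma.Lex.lt_def.mpr (Or.inr ⟨rfl, ha'⟩),
      Sigma.Lex.lt_def.mpr (Or.inl h)⟩
  · dsimp at h
    subst h
    obtain ⟨m, hm1, hm2⟩ := exists_between (hac : a < c)
    exact ⟨⟨γ, m⟩, Sigma.Lex.lt_def.mpr (Or.inr ⟨rfl, hm1⟩),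
      Sigma.Lex.lt_def.mpr (Or.inr ⟨rfl, hm2⟩)⟩

theorem stmt5 (S : Set Ordinal) (hS : ∀ γ ∈ S, γ < omega1)
    (α β : Ordinal) (hαβ : α < β) (hβ : β < omega1) (hα : α ∈ S) :
    Nonempty (Phi S α β ≃o WithBot ℚ) := by
  classical
  -- countability
  have hcard : β.card ≤ Cardinal.aleph0 := by
    have h1 : β.card < Cardinal.aleph 1 := Cardinal.lt_ord.mp hβ
    have h2 : Cardinal.aleph 1 = Order.succ Cardinal.aleph0 := by
      rw [← Cardinal.aleph_zero, ← Cardinal.aleph_succ, Ordinal.succ_zero]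
    rw [h2] at h1
    exact Order.lt_succ_iff.mp h1
  have hIio : (Set.Iio β).Countable := by
    rw [← Cardinal.le_aleph0_iff_set_countable, Ordinal.mk_Iio_ordinal]
    exact (Cardinal.lift_le_aleph0).mpr hcard
  haveI : Countable (Ico α β : Set Ordinal) :=
    (hIio.mono (fun x hx => hx.2)).to_subtype
  haveI : Countable (Phi S α β) :=
    inferInstanceAs (Countable (Σ γ : Ico α β, Eta S γ.1))
  haveI := phi_dense S α β
  haveI := phi_noMax S α β
  -- the bottom element
  set b : Phi S α β := ⟨⟨α, ⟨le_refl α, hαβ⟩⟩, ⟨⊥, Or.inl hα⟩⟩ with hbdef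
  have hb : ∀ x : Phi S α β, b ≤ x := by
    intro x
    obtain ⟨γ, a⟩ := x
    rcases lt_or_eq_of_le γ.2.1 with h | h
    · exact le_of_lt (Sigma.Lex.lt_def.mpr (Or.inl h))
    · have hγ : (⟨α, ⟨le_refl α, hαβ⟩⟩ : Ico α β) = γ := Subtype.ext h
      apply Sigma.Lex.le_def.mpr
      cases hγ
      exact Or.inr ⟨rfl, Subtype.coe_le_coe.mp (bot_le : (⊥ : WithBot ℚ) ≤ a.1)⟩
  -- Y : everything above b
  set Y := {x : Phi S α β // b < x} with hY
  haveI : Countable Y := Subtype.countable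
  haveI : Nonempty Y := by
    obtain ⟨x, hx⟩ := exists_gt b
    exact ⟨⟨x, hx⟩⟩
  haveI : DenselyOrdered Y := by
    constructor
    rintro ⟨x, hx⟩ ⟨y, hy⟩ h
    obtain ⟨z, h1, h2⟩ := exists_between (show x < y from h)
    exact ⟨⟨z, hx.trans h1⟩, h1, h2⟩
  haveI : NoMinOrder Y := by
    constructor
    rintro ⟨x, hx⟩
    obtain ⟨z, h1, h2⟩ := exists_between hx
    exact ⟨⟨z, h1⟩, h2⟩
  haveI : NoMaxOrder Y := by
    constructor
    rintro ⟨x, hx⟩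
    obtain ⟨z, hz⟩ := exists_gt x
    exact ⟨⟨z, hx.trans hz⟩, hz⟩
  obtain ⟨e⟩ : Nonempty (Y ≃o ℚ) := Order.iso_of_countable_dense Y ℚ
  -- WithBot Y ≃o Phi S α β
  let f : WithBot Y → Phi S α β := fun o => o.recBotCoe b Subtype.val
  have hf : StrictMono f := by
    intro u v huv
    cases u with
    | bot =>
      cases v with
      | bot => exact absurd huv (lt_irrefl _)
      | coe y => exact y.2
    | coe x =>
      cases v with
      | bot => exact absurd huv (by simp)
      | coe y => exact (Subtype.coe_lt_coe.mpr (WithBot.coe_lt_coe.mp huv) : x.1 < y.1)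
  let g : Phi S α β → WithBot Y := fun x => if h : b < x then (⟨x, h⟩ : Y) else ⊥
  have hfg : Function.RightInverse g f := by
    intro x
    by_cases h : b < x
    · simp only [g, dif_pos h]; rfl
    · have : x = b := le_antisymm (not_lt.mp h) (hb x)
      simp only [g, dif_neg h]
      exact this.symm
  let F : WithBot Y ≃o Phi S α β := StrictMono.orderIsoOfRightInverse f hf g hfg
  exact ⟨F.symm.trans e.withBotCongr⟩
end
end
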